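/- Let A ∈ ℝ^{n×d} have full column rank and let Ã = (AᵀΠΠᵀA)^{1/2} where ‖I − UᵀΠΠᵀU‖₂ ≤ 1/2, with A = UΣVᵀ the SVD. Set U' = AÃ^{-1}. Then for all x ∈ ℝᵈ, ‖U'x‖₁ ≥ √(2/3)·‖x‖_∞. -/

import Mathlib

open Matrix

/-- Squared Euclidean norm of a vector. -/
noncomputable def sqnorm2 {n : ℕ} (v : Fin n → ℝ) : ℝ := ∑ i, (v i) ^ 2

/-- Spectral (operator) norm of a real matrix. -/
noncomputable def specNorm {m n : ℕ} (M : Matrix (Fin m) (Fin n) ℝ) : ℝ :=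
  sSup {c | ∃ x : Fin n → ℝ, sqnorm2 x = 1 ∧ c = Real.sqrt (sqnorm2 (M.mulVec x))}

open scoped ComplexOrder in
/-- Square root of a positive semidefinite matrix, as defined in Mathlib (Dec 2024);
it was removed from Mathlib since. -/
noncomputable def Matrix.PosSemidef.sqrt {n : Type*} [Fintype n] [DecidableEq n]
    {𝕜 : Type*} [RCLike 𝕜] {A : Matrix n n 𝕜} (hA : A.PosSemidef) : Matrix n n 𝕜 :=
  hA.1.eigenvectorUnitary.1 * diagonal ((↑) ∘ (√·) ∘ hA.1.eigenvalues) *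
    (star hA.1.eigenvectorUnitary : Matrix n n 𝕜)

/-!
Since `Ã` is a symmetric square root of `AᵀΠΠᵀA`, `‖Ãy‖₂² = ‖ΠᵀAy‖₂²`. Writing `A = U (SVᵀ)`,
the bound `‖I − UᵀΠΠᵀU‖₂ ≤ 1/2` says that `Πᵀ` distorts squared lengths in the range of `U`
by a factor within `1 ± 1/2`, so `½‖Ay‖₂² ≤ ‖Ãy‖₂² ≤ (3/2)‖Ay‖₂²`. The lower bound and the
injectivity of `A` make `Ã` invertible; the upper bound at `y = Ã⁻¹x` gives
`‖x‖₂² ≤ (3/2)‖U'x‖₂²`, and `‖x‖_∞ ≤ ‖x‖₂`, `‖U'x‖₂ ≤ ‖U'x‖₁` finish the proof.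
-/

section sqnorm2

variable {n : ℕ}

lemma sqnorm2_eq_dotProduct (v : Fin n → ℝ) : sqnorm2 v = v ⬝ᵥ v := by
  simp only [sqnorm2, dotProduct, sq]

lemma sqnorm2_nonneg (v : Fin n → ℝ) : 0 ≤ sqnorm2 v :=
  Finset.sum_nonneg fun _ _ => sq_nonneg _

lemma sqnorm2_smul (a : ℝ) (v : Fin n → ℝ) : sqnorm2 (a • v) = a ^ 2 * sqnorm2 v := by
  simp only [sqnorm2, Pi.smul_apply, smul_eq_mul, mul_pow, Finset.mul_sum]

lemma sqnorm2_eq_zero_iff {v : Fin n → ℝ} : sqnorm2 v = 0 ↔ v = 0 := by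
  rw [sqnorm2_eq_dotProduct, dotProduct_self_eq_zero]

lemma sqnorm2_mulVec {m : ℕ} (M : Matrix (Fin m) (Fin n) ℝ) (y : Fin n → ℝ) :
    sqnorm2 (M *ᵥ y) = y ⬝ᵥ (Mᵀ * M) *ᵥ y := by
  rw [sqnorm2_eq_dotProduct, ← mulVec_mulVec, dotProduct_mulVec y, vecMul_transpose]

lemma sqnorm2_mulVec_of_transpose_mul_self {m : ℕ} {U : Matrix (Fin m) (Fin n) ℝ}
    (hU : Uᵀ * U = 1) (z : Fin n → ℝ) : sqnorm2 (U *ᵥ z) = sqnorm2 z := by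
  rw [sqnorm2_mulVec, hU, one_mulVec, sqnorm2_eq_dotProduct]

lemma abs_le_sqrt_sqnorm2 (v : Fin n → ℝ) (i : Fin n) : |v i| ≤ √(sqnorm2 v) := by
  rw [← Real.sqrt_sq_eq_abs]
  exact Real.sqrt_le_sqrt <|
    Finset.single_le_sum (f := fun j => v j ^ 2) (fun j _ => sq_nonneg _) (Finset.mem_univ i)

lemma iSup_abs_le_sqrt_sqnorm2 (v : Fin n → ℝ) : ⨆ i, |v i| ≤ √(sqnorm2 v) := by
  rcases isEmpty_or_nonempty (Fin n) with hn | hn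
  · rw [Real.iSup_of_isEmpty]
    exact Real.sqrt_nonneg _
  · exact ciSup_le (abs_le_sqrt_sqnorm2 v)

lemma sqrt_sqnorm2_le_sum_abs (v : Fin n → ℝ) : √(sqnorm2 v) ≤ ∑ i, |v i| := by
  refine Real.sqrt_le_iff.2 ⟨Finset.sum_nonneg fun i _ => abs_nonneg _, ?_⟩
  simpa only [sqnorm2, sq_abs] using
    Finset.sum_sq_le_sq_sum_of_nonneg (s := Finset.univ) fun i _ => abs_nonneg (v i)

lemma abs_dotProduct_le (v w : Fin n → ℝ) : |v ⬝ᵥ w| ≤ √(sqnorm2 v) * √(sqnorm2 w) := by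
  rw [← Real.sqrt_mul (sqnorm2_nonneg v), ← Real.sqrt_sq_eq_abs]
  exact Real.sqrt_le_sqrt (Finset.sum_mul_sq_le_sq_mul_sq _ _ _)

end sqnorm2

section specNorm

variable {m n : ℕ}

lemma bddAbove_specNorm_set (M : Matrix (Fin m) (Fin n) ℝ) :
    BddAbove {c | ∃ x : Fin n → ℝ, sqnorm2 x = 1 ∧ c = √(sqnorm2 (M *ᵥ x))} := by
  refine ⟨√(∑ i, ∑ j, M i j ^ 2), ?_⟩
  rintro _ ⟨x, hx, rfl⟩
  refine Real.sqrt_le_sqrt (Finset.sum_le_sum fun i _ => ?_)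
  calc (M i ⬝ᵥ x) ^ 2 ≤ (∑ j, M i j ^ 2) * ∑ j, x j ^ 2 := Finset.sum_mul_sq_le_sq_mul_sq _ _ _
    _ = ∑ j, M i j ^ 2 := by rw [show ∑ j, x j ^ 2 = 1 from hx, mul_one]

lemma sqrt_sqnorm2_mulVec_le_of_specNorm_le {M : Matrix (Fin m) (Fin n) ℝ} {c : ℝ}
    (hM : specNorm M ≤ c) (z : Fin n → ℝ) : √(sqnorm2 (M *ᵥ z)) ≤ c * √(sqnorm2 z) := by
  rcases (sqnorm2_nonneg z).eq_or_lt with hz | hz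
  · rw [sqnorm2_eq_zero_iff.1 hz.symm]
    simp [sqnorm2]
  set s := √(sqnorm2 z)
  have hs : 0 < s := Real.sqrt_pos.2 hz
  have hunit : sqnorm2 (s⁻¹ • z) = 1 := by
    rw [sqnorm2_smul, inv_pow, Real.sq_sqrt hz.le, inv_mul_cancel₀ hz.ne']
  have hle : √(sqnorm2 (M *ᵥ (s⁻¹ • z))) ≤ c :=
    (le_csSup (bddAbove_specNorm_set M) ⟨_, hunit, rfl⟩).trans hM
  rw [mulVec_smul, sqnorm2_smul, Real.sqrt_mul (sq_nonneg _), Real.sqrt_sq (by positivity),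
    inv_mul_le_iff₀ hs] at hle
  linarith

lemma abs_dotProduct_mulVec_le_of_specNorm_le {B : Matrix (Fin n) (Fin n) ℝ} {c : ℝ}
    (hB : specNorm B ≤ c) (z : Fin n → ℝ) : |z ⬝ᵥ B *ᵥ z| ≤ c * sqnorm2 z := by
  calc |z ⬝ᵥ B *ᵥ z| ≤ √(sqnorm2 z) * √(sqnorm2 (B *ᵥ z)) := abs_dotProduct_le _ _
    _ ≤ √(sqnorm2 z) * (c * √(sqnorm2 z)) :=
      mul_le_mul_of_nonneg_left (sqrt_sqnorm2_mulVec_le_of_specNorm_le hB z) (Real.sqrt_nonneg _)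
    _ = c * sqnorm2 z := by rw [mul_left_comm, Real.mul_self_sqrt (sqnorm2_nonneg z)]

end specNorm

namespace Matrix.PosSemidef

variable {d : ℕ} {M : Matrix (Fin d) (Fin d) ℝ}

lemma transpose_sqrt (hM : M.PosSemidef) : hM.sqrtᵀ = hM.sqrt := by
  simp [sqrt, transpose_mul, star_eq_conjTranspose, Matrix.mul_assoc]

lemma sqrt_mul_self (hM : M.PosSemidef) : hM.sqrt * hM.sqrt = M := by
  set Q : Matrix (Fin d) (Fin d) ℝ := hM.1.eigenvectorUnitary.1
  set D : Matrix (Fin d) (Fin d) ℝ := diagonal ((↑) ∘ (√·) ∘ hM.1.eigenvalues)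
  have hQ : star Q * Q = 1 := Unitary.coe_star_mul_self _
  have hD : D * D = diagonal (RCLike.ofReal ∘ hM.1.eigenvalues) := by
    rw [diagonal_mul_diagonal]
    congr 1
    funext i
    simp [Real.mul_self_sqrt (hM.eigenvalues_nonneg i)]
  calc Q * D * star Q * (Q * D * star Q) = Q * (D * (star Q * Q) * D) * star Q := by
        simp only [Matrix.mul_assoc]
    _ = M := by
        rw [hQ, Matrix.mul_one, hD]
        conv_rhs => rw [hM.1.spectral_theorem, Unitary.conjStarAlgAut_apply]

lemma sqnorm2_sqrt_mulVec (hM : M.PosSemidef) (y : Fin d → ℝ) :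
    sqnorm2 (hM.sqrt *ᵥ y) = y ⬝ᵥ M *ᵥ y := by
  rw [sqnorm2_mulVec, transpose_sqrt, sqrt_mul_self]

end Matrix.PosSemidef

lemma sqnorm2_transpose_mulVec_mulVec {n d r : ℕ} (P : Matrix (Fin n) (Fin r) ℝ)
    (A : Matrix (Fin n) (Fin d) ℝ) (y : Fin d → ℝ) :
    sqnorm2 (Pᵀ *ᵥ (A *ᵥ y)) = y ⬝ᵥ (Aᵀ * P * Pᵀ * A) *ᵥ y := by
  rw [mulVec_mulVec, sqnorm2_mulVec, transpose_mul, transpose_transpose, Matrix.mul_assoc,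
    Matrix.mul_assoc, Matrix.mul_assoc]

lemma abs_sqnorm2_transpose_mulVec_sub_le {n k d r : ℕ} {U : Matrix (Fin n) (Fin k) ℝ}
    {C : Matrix (Fin k) (Fin d) ℝ} {A : Matrix (Fin n) (Fin d) ℝ} {P : Matrix (Fin n) (Fin r) ℝ}
    {ε : ℝ} (hU : Uᵀ * U = 1) (hP : specNorm (1 - Uᵀ * P * Pᵀ * U) ≤ ε) (hA : A = U * C)
    (y : Fin d → ℝ) :
    |sqnorm2 (Pᵀ *ᵥ (A *ᵥ y)) - sqnorm2 (A *ᵥ y)| ≤ ε * sqnorm2 (A *ᵥ y) := by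
  subst hA
  rw [← mulVec_mulVec, sqnorm2_transpose_mulVec_mulVec, sqnorm2_mulVec_of_transpose_mul_self hU,
    ← abs_neg, neg_sub]
  simpa only [sub_mulVec, one_mulVec, dotProduct_sub, sqnorm2_eq_dotProduct] using
    abs_dotProduct_mulVec_le_of_specNorm_le hP (C *ᵥ y)

lemma eq_zero_of_svd_mulVec_eq_zero {K : Type*} [Field K] {m k : Type*} [Fintype m]
    [Fintype k] [DecidableEq k] {U : Matrix m k K} {σ : k → K} {V : Matrix k k K}
    (hσ : ∀ i, σ i ≠ 0) (hU : Uᵀ * U = 1) (hV : Vᵀ * V = 1) {z : k → K}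
    (hz : (U * diagonal σ * Vᵀ) *ᵥ z = 0) : z = 0 := by
  have hunit : IsUnit (diagonal σ * Vᵀ) :=
    (isUnit_diagonal.2 (Pi.isUnit_iff.2 fun i => (hσ i).isUnit)).mul (IsUnit.of_mul_eq_one V hV)
  refine mulVec_injective_iff_isUnit.2 hunit ?_
  rw [mulVec_zero, ← Matrix.one_mul (diagonal σ * Vᵀ), ← hU, Matrix.mul_assoc, ← mulVec_mulVec,
    ← Matrix.mul_assoc, hz, mulVec_zero]

lemma isUnit_det_of_mul_sqnorm2_mulVec_le {n d : ℕ} {A : Matrix (Fin n) (Fin d) ℝ}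
    {R : Matrix (Fin d) (Fin d) ℝ} {c : ℝ} (hc : 0 < c) (hA : ∀ y, A *ᵥ y = 0 → y = 0)
    (h : ∀ y, c * sqnorm2 (A *ᵥ y) ≤ sqnorm2 (R *ᵥ y)) : IsUnit R.det := by
  rw [← isUnit_iff_isUnit_det, ← mulVec_injective_iff_isUnit]
  intro a b hab
  have hR : R *ᵥ (a - b) = 0 := by rw [mulVec_sub, hab, sub_self]
  have hAab : sqnorm2 (A *ᵥ (a - b)) = 0 := by
    have := h (a - b)
    rw [hR, sqnorm2_eq_zero_iff.2 rfl] at this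
    exact le_antisymm (nonpos_of_mul_nonpos_right this hc) (sqnorm2_nonneg _)
  exact sub_eq_zero.1 (hA _ (sqnorm2_eq_zero_iff.1 hAab))

lemma sqrt_mul_iSup_abs_le_sum_abs_mul_inv_mulVec {n d : ℕ} {A : Matrix (Fin n) (Fin d) ℝ}
    {R : Matrix (Fin d) (Fin d) ℝ} {c : ℝ} (hc : 0 ≤ c) (hR : IsUnit R.det)
    (h : ∀ y, c * sqnorm2 (R *ᵥ y) ≤ sqnorm2 (A *ᵥ y)) (x : Fin d → ℝ) :
    √c * ⨆ i, |x i| ≤ ∑ i, |((A * R⁻¹) *ᵥ x) i| := by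
  set y := R⁻¹ *ᵥ x
  have hRy : R *ᵥ y = x := by rw [mulVec_mulVec, mul_nonsing_inv R hR, one_mulVec]
  calc √c * ⨆ i, |x i| ≤ √c * √(sqnorm2 x) := by gcongr; exact iSup_abs_le_sqrt_sqnorm2 x
    _ = √(c * sqnorm2 (R *ᵥ y)) := by rw [hRy, Real.sqrt_mul hc]
    _ ≤ √(sqnorm2 (A *ᵥ y)) := Real.sqrt_le_sqrt (h y)
    _ ≤ ∑ i, |(A *ᵥ y) i| := sqrt_sqnorm2_le_sum_abs _
    _ = ∑ i, |((A * R⁻¹) *ᵥ x) i| := by rw [mulVec_mulVec]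

/-- the basis `U' = A Ã⁻¹` built from the ℓ₂-embedding
`Ã = (AᵀΠΠᵀA)^{1/2}` (with `‖I − UᵀΠΠᵀU‖₂ ≤ 1/2`) satisfies
`‖U'x‖₁ ≥ √(2/3)·‖x‖_∞` for all `x`. -/
theorem stmt14 {n d r : ℕ}
    (A U : Matrix (Fin n) (Fin d) ℝ) (S V : Matrix (Fin d) (Fin d) ℝ)
    (σ : Fin d → ℝ) (hσ : ∀ i, 0 < σ i) (hS : S = Matrix.diagonal σ)
    (hU : Uᵀ * U = 1) (hV : Vᵀ * V = 1) (hA : A = U * S * Vᵀ)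
    (Pi : Matrix (Fin n) (Fin r) ℝ)
    (hPi : specNorm ((1 : Matrix (Fin d) (Fin d) ℝ) - Uᵀ * Pi * Piᵀ * U) ≤ 1 / 2)
    (hPSD : (Aᵀ * Pi * Piᵀ * A).PosSemidef) :
    ∀ x : Fin d → ℝ,
      Real.sqrt (2 / 3) * (⨆ i, |x i|) ≤ ∑ i, |(A * hPSD.sqrt⁻¹).mulVec x i| := by
  have hsqrt (y : Fin d → ℝ) : sqnorm2 (hPSD.sqrt *ᵥ y) = sqnorm2 (Piᵀ *ᵥ (A *ᵥ y)) := by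
    rw [hPSD.sqnorm2_sqrt_mulVec, sqnorm2_transpose_mulVec_mulVec]
  have hembed (y : Fin d → ℝ) := abs_le.1 <|
    abs_sqnorm2_transpose_mulVec_sub_le hU hPi (hA.trans (Matrix.mul_assoc _ _ _)) y
  have hker (y : Fin d → ℝ) (hy : A *ᵥ y = 0) : y = 0 :=
    eq_zero_of_svd_mulVec_eq_zero (fun i => (hσ i).ne') hU hV (by rwa [← hS, ← hA])
  have hdet : IsUnit hPSD.sqrt.det :=
    isUnit_det_of_mul_sqnorm2_mulVec_le (c := 1 / 2) (by norm_num) hker fun y => by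
      rw [hsqrt]; linarith [hembed y]
  exact sqrt_mul_iSup_abs_le_sum_abs_mul_inv_mulVec (by norm_num) hdet fun y => by
    rw [hsqrt]; linarith [hembed y]
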